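/- arXiv:2207.11847 — 2 statements merged into one kernel-verified Lean document; each statement's English description precedes it below -/
import Mathlib

section
/- For the cycle g = (x ↦ ι₀ ⊗ e + ρ₃ ⊗ y² + ρ₁ ⊗ y³) ∈ Mor(B, C), the induced map satisfies (I_{A_p} ⊠ g)(α ⊗ x) = α ⊗ e + Σ_{i=0}^{p−2} β_{2p−i−2} ⊗ y³. -/
/-!
We work over the field `F₂ = ZMod 2`.

The torus algebra `𝒜` is encoded as the 8-dimensional `F₂`-vector space
`Fin 8 → F₂` with basis indices
`0 = ι₀`, `1 = ι₁`, `2 = ρ₁`, `3 = ρ₂`, `4 = ρ₃`, `5 = ρ₁₂`, `6 = ρ₂₃`, `7 = ρ₁₂₃`,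
and with the multiplication determined by the multiplication table `mulTable`
(rows/columns indexed by basis elements), which records that `ι₀, ι₁` are
orthogonal idempotents with `ι₀ + ι₁ = 1`, that
`ρ₁ = ι₀ρ₁ι₁`, `ρ₂ = ι₁ρ₂ι₀`, `ρ₃ = ι₀ρ₃ι₁`, `ρ₁₂ = ι₀ρ₁₂ι₀`, `ρ₂₃ = ι₁ρ₂₃ι₁`,
`ρ₁₂₃ = ι₀ρ₁₂₃ι₁`, and that the only nonzero products of `ρ`-elements are
`ρ₁ρ₂ = ρ₁₂`, `ρ₂ρ₃ = ρ₂₃`, `ρ₁ρ₂₃ = ρ₁₂₃`, `ρ₁₂ρ₃ = ρ₁₂₃`.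
-/

/-- The ground field `F₂`. -/
abbrev F2 : Type := ZMod 2

/-- The torus algebra as an `F₂`-vector space. -/
abbrev Alg : Type := Fin 8 → F2

/-- The `i`-th basis vector of the torus algebra. -/
def bv (i : Fin 8) : Alg := Pi.single i 1

/-- The multiplication table of the torus algebra on basis elements:
entry `(i, j)` is the product of the `i`-th and `j`-th basis elements. -/
def mulTable : Fin 8 → Fin 8 → Alg :=
  ![![bv 0, 0, bv 2, 0, bv 4, bv 5, 0, bv 7],
    ![0, bv 1, 0, bv 3, 0, 0, bv 6, 0],
    ![0, bv 2, 0, bv 5, 0, 0, bv 7, 0],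
    ![bv 3, 0, 0, 0, bv 6, 0, 0, 0],
    ![0, bv 4, 0, 0, 0, 0, 0, 0],
    ![bv 5, 0, 0, 0, bv 7, 0, 0, 0],
    ![0, bv 6, 0, 0, 0, 0, 0, 0],
    ![0, bv 7, 0, 0, 0, 0, 0, 0]]

/-- The multiplication `μ : 𝒜 ⊗ 𝒜 → 𝒜` of the torus algebra, as a bilinear
operation extended from the multiplication table. -/
def algMul (x y : Alg) : Alg := fun k => ∑ i, ∑ j, x i * y j * mulTable i j k
/-- The type-D structure `B`: a single generator `x` (the unique element of `Unit`)
lying in the idempotent `ι₀`, with `δ¹(x) = ρ₁₂ ⊗ x`.  `deltaB s t` is the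
`𝒜`-coefficient of `t` in `δ¹(s)`. -/
def deltaB : Unit → Unit → Alg := fun _ _ => bv 5

/-- The idempotent of the generator of `B`. -/
def idemB : Unit → Fin 2 := fun _ => 0
/-- The type-D structure `C`, with basis indexed by `Fin 8`:
`0 = a`, `1 = b`, `2 = c`, `3 = e`, `4 = y¹`, `5 = y²`, `6 = y³`, `7 = y⁴`.
`deltaC s t` is the `𝒜`-coefficient of `t` in `δ¹(s)`; the differentials are
`δ¹(a) = ρ₃ ⊗ y¹ + ρ₁ ⊗ y⁴`, `δ¹(y¹) = ρ₂ ⊗ b`, `δ¹(b) = ρ₁ ⊗ y²`,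
`δ¹(c) = ρ₃ ⊗ y³ + ρ₁₂₃ ⊗ y⁴`, `δ¹(y³) = ρ₂ ⊗ e`, `δ¹(e) = ρ₁₂₃ ⊗ y²`,
`δ¹(y²) = δ¹(y⁴) = 0`. -/
def deltaC : Fin 8 → Fin 8 → Alg :=
  ![![0, 0, 0, 0, bv 4, 0, 0, bv 2],
    ![0, 0, 0, 0, 0, bv 2, 0, 0],
    ![0, 0, 0, 0, 0, 0, bv 4, bv 7],
    ![0, 0, 0, 0, 0, bv 7, 0, 0],
    ![0, bv 3, 0, 0, 0, 0, 0, 0],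
    ![0, 0, 0, 0, 0, 0, 0, 0],
    ![0, 0, 0, bv 3, 0, 0, 0, 0],
    ![0, 0, 0, 0, 0, 0, 0, 0]]

/-- The idempotents of the generators of `C`: `a, b, c, e ∈ ι₀C` and
`y¹, y², y³, y⁴ ∈ ι₁C`. -/
def idemC : Fin 8 → Fin 2 := fun g => if (g : ℕ) < 4 then 0 else 1
/-- The last vertex of a path: `lastNode s [t₁, …, t_j] = t_j` (or `s` if the
path is empty). -/
def lastNode {S : Type} : S → List S → S
  | s, [] => s
  | _, t :: ts => lastNode t ts

/-- The list of `𝒜`-coefficients read along a path: for `δʲ`, the term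
`a₁ ⊗ ⋯ ⊗ a_j ⊗ t_j` appearing in `δʲ(s)` corresponding to the path
`s → t₁ → ⋯ → t_j` has `chain δ s [t₁, …, t_j] = [δ(s,t₁), δ(t₁,t₂), …]`. -/
def chain {S : Type} (δ : S → S → Alg) : S → List S → List Alg
  | _, [] => []
  | s, t :: ts => δ s t :: chain δ t ts

/-- Helper: multilinear coefficient of the pattern `ρ₂₃, …, ρ₂₃, ρ₂`:
the product of the `ρ₂₃`-coefficients of all but the last entry with the
`ρ₂`-coefficient of the last entry. -/
def tail23 : List Alg → F2
  | [] => 0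
  | [a] => a 3
  | a :: as => a 6 * tail23 as
/-- The product of the `k`-th coefficients of the entries of a list. -/
def prodAt (k : Fin 8) (l : List Alg) : F2 := (l.map fun a => a k).prod

/-- The `k`-th coefficient of the last entry of a list (`0` for the empty list). -/
def lastC (k : Fin 8) (l : List Alg) : F2 := (l.getLast?.map fun a => a k).getD 0

/-- The `k`-th coefficient of the `j`-th entry of a list (`0` if out of range). -/
def getC (k : Fin 8) (l : List Alg) (j : ℕ) : F2 := (l[j]?.map fun a => a k).getD 0

open Polynomial in
/-- The `A∞`-operations of the module `A_p = CFA⁻(𝓗_p)` associated to the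
`(p,1)`-cable pattern, with generators `α` (encoded as `none`) and
`β₁, …, β_{2p−2}` (encoded as `some i` with `βₖ ↦ some (k-1)`), extended
multilinearly: `mcoefAp p as g` is the `F₂[U]`-coefficient
(`U = Polynomial.X`) of the generator `g` in `m_{1 + as.length}(α, as)`.
The only nonzero operations with first input `α` are strict unitality
`m₂(α, ι₀) = α` together with:
* `m_{3+j}(α, ρ₃, ρ₂₃, …, ρ₂₃, ρ₂) = U^{p(j+1)} ⬝ α` (with `j ≥ 0` copies of `ρ₂₃`);
* `m_{2+i}(α, ρ₁₂, …, ρ₁₂, ρ₁) = β_{2p−i−2}` (with `0 ≤ i ≤ p−2` copies of `ρ₁₂`);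
* `m_{4+i+j}(α, ρ₃, ρ₂₃, …, ρ₂₃, ρ₂, ρ₁₂, …, ρ₁₂, ρ₁) = U^{pj+i+1} ⬝ β_{i+1}`
  (with `j ≥ 0` copies of `ρ₂₃` and `0 ≤ i ≤ p−2` copies of `ρ₁₂`). -/
noncomputable def mcoefAp (p : ℕ) (as : List Alg) : Option (Fin (2 * p - 2)) → Polynomial F2
  | none =>
      match as with
      | [] => 0
      | [a] => C (a 0)
      | a :: rest => C (a 4 * tail23 rest) * X ^ (p * rest.length)
  | some i =>
      (if as.length ≤ p - 1 ∧ (i : ℕ) = 2 * p - as.length - 2 then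
        C (prodAt 5 as.dropLast * lastC 2 as) else 0) +
      (match as with
       | [] => 0
       | a :: rest =>
          if (i : ℕ) ≤ p - 2 ∧ (i : ℕ) + 3 ≤ as.length then
            C (a 4 * prodAt 6 (rest.take (as.length - 3 - (i : ℕ))) *
                getC 3 rest (as.length - 3 - (i : ℕ)) *
                prodAt 5 ((rest.drop (as.length - 3 - (i : ℕ) + 1)).dropLast) *
                lastC 2 rest) *
              X ^ (p * (as.length - 3 - (i : ℕ)) + (i : ℕ) + 1)
          else 0)

/-- The box tensor product `(I_{A_p} ⊠ f)(α ⊗ n)` of the identity of the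
`A∞`-module `A_p` with a morphism `f ∈ Mor(N, N′)` of type-D structures, as an
element of `A_p ⊗ N′` (a function assigning to each pair `(g, u)` — a generator
`g` of `A_p` and a basis element `u` of `N′` — the `F₂[U]`-coefficient of
`g ⊗ u`):
`(I_{A_p} ⊠ f)(α ⊗ n) = Σ_{j,l ≥ 0} m_{j+l+2}(α, a₁, …, a_j, b, c₁, …, c_l) ⊗ n″`,
summed over all terms `a₁ ⊗ ⋯ ⊗ a_j ⊗ n′` appearing in `δʲ(n)` (paths `P.1`
in `N`), `b ⊗ m′` appearing in `f(n′)` (the intermediate basis element `t`),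
and `c₁ ⊗ ⋯ ⊗ c_l ⊗ n″` appearing in `δˡ(m′)` (paths `P.2` in `N′`). -/
noncomputable def boxAp (p : ℕ) {S T : Type} [Fintype T] [DecidableEq T]
    (δN : S → S → Alg) (δM : T → T → Alg) (f : S → T → Alg) (n : S) :
    Option (Fin (2 * p - 2)) × T → Polynomial F2 :=
  fun gu => ∑ᶠ P : List S × List T, ∑ t : T,
    if lastNode t P.2 = gu.2 then
      mcoefAp p (chain δN n P.1 ++ f (lastNode n P.1) t :: chain δM t P.2) gu.1
    else 0
/-- The morphism `g = (x ↦ ι₀ ⊗ e + ρ₃ ⊗ y² + ρ₁ ⊗ y³) ∈ Mor(B, C)`. -/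
def gMat : Unit → Fin 8 → Alg := fun _ => ![0, 0, 0, bv 0, 0, bv 4, bv 2, 0]

section Aux
open Polynomial

/-- Second-summand helper, copy of the inner match of `mcoefAp` for `some`. -/
noncomputable def S2 (p : ℕ) (i : Fin (2 * p - 2)) : List Alg → Polynomial F2
  | [] => 0
  | a :: rest =>
      if (i : ℕ) ≤ p - 2 ∧ (i : ℕ) + 3 ≤ (a :: rest).length then
        C (a 4 * prodAt 6 (rest.take ((a :: rest).length - 3 - (i : ℕ))) *
            getC 3 rest ((a :: rest).length - 3 - (i : ℕ)) *
            prodAt 5 ((rest.drop ((a :: rest).length - 3 - (i : ℕ) + 1)).dropLast) *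
            lastC 2 rest) *
          X ^ (p * ((a :: rest).length - 3 - (i : ℕ)) + (i : ℕ) + 1)
      else 0

lemma mA_some (p : ℕ) (i : Fin (2 * p - 2)) (as : List Alg) :
    mcoefAp p as (some i) =
      (if as.length ≤ p - 1 ∧ (i : ℕ) = 2 * p - as.length - 2 then
        C (prodAt 5 as.dropLast * lastC 2 as) else 0) + S2 p i as := by
  cases as <;> rfl

lemma mA_none_single (p : ℕ) (a : Alg) : mcoefAp p [a] none = C (a 0) := rfl

lemma mA_none_cons (p : ℕ) (a b : Alg) (t : List Alg) :
    mcoefAp p (a :: b :: t) none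
      = C (a 4 * tail23 (b :: t)) * X ^ (p * (b :: t).length) := rfl

lemma S2_cons (p : ℕ) (i : Fin (2 * p - 2)) (a : Alg) (rest : List Alg) :
    S2 p i (a :: rest) =
      if (i : ℕ) ≤ p - 2 ∧ (i : ℕ) + 3 ≤ rest.length + 1 then
        C (a 4 * prodAt 6 (rest.take (rest.length + 1 - 3 - (i : ℕ))) *
            getC 3 rest (rest.length + 1 - 3 - (i : ℕ)) *
            prodAt 5 ((rest.drop (rest.length + 1 - 3 - (i : ℕ) + 1)).dropLast) *
            lastC 2 rest) *
          X ^ (p * (rest.length + 1 - 3 - (i : ℕ)) + (i : ℕ) + 1)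
      else 0 := rfl

lemma tail23_zero : ∀ {l : List Alg}, (0 : Alg) ∈ l → tail23 l = 0
  | [], h => by simp at h
  | [a], h => by
      simp only [List.mem_singleton] at h
      rw [show tail23 [a] = a 3 from rfl, ← h]; rfl
  | a :: b :: t, h => by
      rw [show tail23 (a :: b :: t) = a 6 * tail23 (b :: t) from rfl]
      rcases List.mem_cons.1 h with h | h
      · rw [← h]; show (0 : F2) * _ = 0; rw [zero_mul]
      · rw [tail23_zero h, mul_zero]

lemma prodAt_zero {k : Fin 8} {l : List Alg} (h : (0 : Alg) ∈ l) : prodAt k l = 0 :=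
  List.prod_eq_zero (List.mem_map.2 ⟨0, h, rfl⟩)

lemma prodAt_append (k : Fin 8) (l₁ l₂ : List Alg) :
    prodAt k (l₁ ++ l₂) = prodAt k l₁ * prodAt k l₂ := by
  simp [prodAt]

lemma prodAt_replicate5 (n : ℕ) : prodAt 5 (List.replicate n (bv 5)) = 1 := by
  simp only [prodAt, List.map_replicate, List.prod_replicate]
  rw [show (bv 5) 5 = 1 by decide, one_pow]

lemma lastC_append {k : Fin 8} (l₁ : List Alg) {l₂ : List Alg} (h : l₂ ≠ []) :
    lastC k (l₁ ++ l₂) = lastC k l₂ := by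
  unfold lastC
  rw [List.getLast?_append_of_ne_nil l₁ h]

lemma lastC_getLast {k : Fin 8} {l : List Alg} (h : l ≠ []) :
    lastC k l = l.getLast h k := by
  unfold lastC
  rw [List.getLast?_eq_getLast_of_ne_nil h]; rfl

lemma fs_zero {as : List Alg} (h : (0 : Alg) ∈ as) :
    prodAt 5 as.dropLast * lastC 2 as = 0 := by
  have hne : as ≠ [] := List.ne_nil_of_mem h
  rw [← List.dropLast_append_getLast hne] at h
  rcases List.mem_append.1 h with h | h
  · rw [prodAt_zero h, zero_mul]
  · simp only [List.mem_singleton] at h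
    rw [lastC_getLast hne, ← h]
    show _ * (0 : F2) = 0
    rw [mul_zero]

lemma ss_zero {a : Alg} {rest : List Alg} (h : a = 0 ∨ (0 : Alg) ∈ rest) (n : ℕ) :
    a 4 * prodAt 6 (rest.take n) * getC 3 rest n *
      prodAt 5 ((rest.drop (n + 1)).dropLast) * lastC 2 rest = 0 := by
  rcases h with h | h
  · rw [h]; show (0 : F2) * _ * _ * _ * _ = 0; ring
  · have hne : rest ≠ [] := List.ne_nil_of_mem h
    obtain ⟨m, hm, hm0⟩ := List.getElem_of_mem h
    by_cases hlast : m = rest.length - 1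
    · have hz : lastC 2 rest = 0 := by
        subst hlast
        rw [lastC_getLast hne, List.getLast_eq_getElem]
        exact congrFun hm0 2
      rw [hz, mul_zero]
    · have hm' : m < rest.length - 1 := by omega
      rcases lt_trichotomy m n with hmn | hmn | hmn
      · have hz : (0 : Alg) ∈ rest.take n := by
          refine List.mem_iff_getElem.2 ⟨m, by simp; omega, ?_⟩
          rw [List.getElem_take]
          exact hm0
        rw [prodAt_zero hz]; ring
      · have hz : getC 3 rest n = 0 := by
          unfold getC
          rw [← hmn, List.getElem?_eq_getElem hm, hm0]
          rfl
        rw [hz]; ring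
      · have hz : (0 : Alg) ∈ (rest.drop (n + 1)).dropLast := by
          refine List.mem_iff_getElem.2 ⟨m - (n + 1), by simp; omega, ?_⟩
          rw [List.getElem_dropLast, List.getElem_drop]
          have hEq : n + 1 + (m - (n + 1)) = m := by omega
          simp_rw [hEq]
          exact hm0
        rw [prodAt_zero hz]; ring

lemma mcoefAp_zero (p : ℕ) {as : List Alg} (h : (0 : Alg) ∈ as)
    (g : Option (Fin (2 * p - 2))) : mcoefAp p as g = 0 := by
  cases g with
  | none =>
    rcases as with _ | ⟨a, _ | ⟨b, t⟩⟩
    · simp at h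
    · simp only [List.mem_singleton] at h
      rw [mA_none_single, ← h]
      show C (0 : F2) = 0
      simp
    · rw [mA_none_cons]
      rcases List.mem_cons.1 h with h | h
      · rw [← h]
        show C ((0 : F2) * _) * _ = 0
        simp
      · rw [tail23_zero h]
        simp
  | some i =>
    rcases as with _ | ⟨a, rest⟩
    · simp at h
    · rw [mA_some, S2_cons, fs_zero h]
      have h' : a = 0 ∨ (0 : Alg) ∈ rest := by
        rcases List.mem_cons.1 h with h | h
        · exact Or.inl h.symm
        · exact Or.inr h
      rw [ss_zero h' (rest.length + 1 - 3 - (i : ℕ))]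
      simp

end Aux
section Mid
open Polynomial

lemma mcoef_none (p n : ℕ) (b : Alg) (l : List Alg) (h : n = 0 → l ≠ [] → b 4 = 0) :
    mcoefAp p (List.replicate n (bv 5) ++ b :: l) none
      = if n = 0 ∧ l = [] then C (b 0) else 0 := by
  cases n with
  | zero =>
    cases l with
    | nil => simpa using mA_none_single p b
    | cons c t =>
      rw [show List.replicate 0 (bv 5) ++ b :: c :: t = b :: c :: t from rfl,
        mA_none_cons, h rfl (by simp)]
      simp
  | succ m =>
    obtain ⟨c, t, hct⟩ : ∃ c t, List.replicate m (bv 5) ++ b :: l = c :: t := by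
      cases m with
      | zero => exact ⟨b, l, rfl⟩
      | succ k => exact ⟨bv 5, _, rfl⟩
    rw [List.replicate_succ, List.cons_append, hct, mA_none_cons,
      show (bv 5) 4 = 0 by decide]
    simp

lemma mcoef_some (p n : ℕ) (b : Alg) (l : List Alg) (i : Fin (2 * p - 2))
    (h : n = 0 → l ≠ [] → b 4 = 0) :
    mcoefAp p (List.replicate n (bv 5) ++ b :: l) (some i) =
      if n + l.length + 1 ≤ p - 1 ∧ (i : ℕ) = 2 * p - (n + l.length + 1) - 2 then
        C (prodAt 5 (b :: l).dropLast * lastC 2 (b :: l)) else 0 := by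
  rw [mA_some]
  have key1 : (List.replicate n (bv 5) ++ b :: l).dropLast
      = List.replicate n (bv 5) ++ (b :: l).dropLast := List.dropLast_append_cons
  have key2 : prodAt 5 (List.replicate n (bv 5) ++ b :: l).dropLast
      = prodAt 5 (b :: l).dropLast := by
    rw [key1, prodAt_append, prodAt_replicate5, one_mul]
  have key3 : lastC 2 (List.replicate n (bv 5) ++ b :: l) = lastC 2 (b :: l) :=
    lastC_append _ (by simp)
  have key4 : (List.replicate n (bv 5) ++ b :: l).length = n + l.length + 1 := by
    simp only [List.length_append, List.length_replicate, List.length_cons]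
    omega
  rw [key2, key3, key4]
  have hS2 : S2 p i (List.replicate n (bv 5) ++ b :: l) = 0 := by
    cases n with
    | zero =>
      rw [show List.replicate 0 (bv 5) ++ b :: l = b :: l from rfl, S2_cons]
      cases l with
      | nil => rw [if_neg (by simp only [List.length_nil]; omega)]
      | cons c t =>
        rw [h rfl (by simp)]
        simp
    | succ m =>
      rw [List.replicate_succ, List.cons_append, S2_cons,
        show (bv 5) 4 = 0 by decide]
      simp
  rw [hS2, add_zero]

lemma chainB : ∀ (x : Unit) (l : List Unit),
    chain deltaB x l = List.replicate l.length (bv 5)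
  | _, [] => rfl
  | x, t :: ts => by
    rw [show chain deltaB x (t :: ts) = deltaB x t :: chain deltaB t ts from rfl,
      chainB t ts]
    rfl

lemma termZero (p : ℕ) (hp : 2 ≤ p) (n : ℕ) (l₂ : List (Fin 8)) (t : Fin 8)
    (g : Option (Fin (2 * p - 2))) (h : l₂ ≠ [] ∨ p - 1 ≤ n) :
    mcoefAp p (List.replicate n (bv 5) ++ gMat () t :: chain deltaC t l₂) g = 0 := by
  have hC5 : ∀ r, deltaC 5 r = 0 := by decide
  have hC3 : ∀ r, r ≠ 5 → deltaC 3 r = 0 := by decide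
  have hC6 : ∀ s, s ≠ 3 → deltaC 6 s = 0 := by decide
  -- case on whether t has zero g-coefficient
  by_cases ht : t = 3 ∨ t = 5 ∨ t = 6
  · rcases ht with rfl | rfl | rfl
    · rw [show gMat () 3 = bv 0 by decide]
      rcases l₂ with _ | ⟨s, rest⟩
      · have hn : p - 1 ≤ n := h.resolve_left (by simp)
        rw [show chain deltaC 3 [] = [] from rfl]
        cases g with
        | none =>
          rw [mcoef_none p n (bv 0) [] (fun _ hh => absurd rfl hh),
            if_neg (fun hc => absurd hc.1 (by omega))]
        | some i =>
          rw [mcoef_some p n (bv 0) [] i (fun _ hh => absurd rfl hh),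
            show lastC 2 [bv 0] = 0 by decide]
          simp
      · by_cases hs : s = 5
        · subst hs
          rcases rest with _ | ⟨r, rr⟩
          · rw [show chain deltaC 3 [5] = [bv 7] by decide]
            cases g with
            | none =>
              rw [mcoef_none p n (bv 0) [bv 7] (fun _ _ => by decide),
                if_neg (by simp)]
            | some i =>
              rw [mcoef_some p n (bv 0) [bv 7] i (fun _ _ => by decide),
                show lastC 2 [bv 0, bv 7] = 0 by decide]
              simp
          · refine mcoefAp_zero p ?_ g
            have hch : chain deltaC 3 (5 :: r :: rr)
                = bv 7 :: 0 :: chain deltaC r rr := by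
              rw [show chain deltaC 3 (5 :: r :: rr)
                  = deltaC 3 5 :: deltaC 5 r :: chain deltaC r rr from rfl,
                hC5 r, show deltaC 3 5 = bv 7 by decide]
            rw [hch]
            simp
        · refine mcoefAp_zero p ?_ g
          have hch : chain deltaC 3 (s :: rest) = 0 :: chain deltaC s rest := by
            rw [show chain deltaC 3 (s :: rest)
                = deltaC 3 s :: chain deltaC s rest from rfl, hC3 s hs]
          rw [hch]
          simp
    · rw [show gMat () 5 = bv 4 by decide]
      rcases l₂ with _ | ⟨s, rest⟩
      · rw [show chain deltaC 5 [] = [] from rfl]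
        cases g with
        | none =>
          rw [mcoef_none p n (bv 4) [] (fun _ hh => absurd rfl hh),
            show (bv 4) 0 = (0 : F2) by decide]
          simp
        | some i =>
          rw [mcoef_some p n (bv 4) [] i (fun _ hh => absurd rfl hh),
            show lastC 2 [bv 4] = 0 by decide]
          simp
      · refine mcoefAp_zero p ?_ g
        have hch : chain deltaC 5 (s :: rest) = 0 :: chain deltaC s rest := by
          rw [show chain deltaC 5 (s :: rest)
              = deltaC 5 s :: chain deltaC s rest from rfl, hC5 s]
        rw [hch]
        simp
    · rw [show gMat () 6 = bv 2 by decide]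
      rcases l₂ with _ | ⟨s, rest⟩
      · have hn : p - 1 ≤ n := h.resolve_left (by simp)
        rw [show chain deltaC 6 [] = [] from rfl]
        cases g with
        | none =>
          rw [mcoef_none p n (bv 2) [] (fun _ hh => absurd rfl hh),
            show (bv 2) 0 = (0 : F2) by decide]
          simp
        | some i =>
          rw [mcoef_some p n (bv 2) [] i (fun _ hh => absurd rfl hh),
            if_neg (fun hc => absurd hc.1 (by simp only [List.length_nil]; omega))]
      · by_cases hs : s = 3
        · subst hs
          rcases rest with _ | ⟨r, rr⟩
          · rw [show chain deltaC 6 [3] = [bv 3] by decide]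
            cases g with
            | none =>
              rw [mcoef_none p n (bv 2) [bv 3] (fun _ _ => by decide),
                if_neg (by simp)]
            | some i =>
              rw [mcoef_some p n (bv 2) [bv 3] i (fun _ _ => by decide),
                show lastC 2 [bv 2, bv 3] = 0 by decide]
              simp
          · by_cases hr : r = 5
            · subst hr
              rcases rr with _ | ⟨r2, rr2⟩
              · rw [show chain deltaC 6 [3, 5] = [bv 3, bv 7] by decide]
                cases g with
                | none =>
                  rw [mcoef_none p n (bv 2) [bv 3, bv 7] (fun _ _ => by decide),
                    if_neg (by simp)]
                | some i =>
                  rw [mcoef_some p n (bv 2) [bv 3, bv 7] i (fun _ _ => by decide),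
                    show lastC 2 [bv 2, bv 3, bv 7] = 0 by decide]
                  simp
              · refine mcoefAp_zero p ?_ g
                have hch : chain deltaC 6 (3 :: 5 :: r2 :: rr2)
                    = deltaC 6 3 :: deltaC 3 5 :: 0 :: chain deltaC r2 rr2 := by
                  rw [show chain deltaC 6 (3 :: 5 :: r2 :: rr2)
                      = deltaC 6 3 :: deltaC 3 5 :: deltaC 5 r2 :: chain deltaC r2 rr2
                      from rfl, hC5 r2]
                rw [hch]
                simp
            · refine mcoefAp_zero p ?_ g
              have hch : chain deltaC 6 (3 :: r :: rr)
                  = deltaC 6 3 :: 0 :: chain deltaC r rr := by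
                rw [show chain deltaC 6 (3 :: r :: rr)
                    = deltaC 6 3 :: deltaC 3 r :: chain deltaC r rr from rfl, hC3 r hr]
              rw [hch]
              simp
        · refine mcoefAp_zero p ?_ g
          have hch : chain deltaC 6 (s :: rest) = 0 :: chain deltaC s rest := by
            rw [show chain deltaC 6 (s :: rest)
                = deltaC 6 s :: chain deltaC s rest from rfl, hC6 s hs]
          rw [hch]
          simp
  · have h0 : gMat () t = 0 := by
      fin_cases t <;> first | decide | (exact absurd (by simp) ht)
    rw [h0]
    exact mcoefAp_zero p (by simp) g

end Mid
section Main
open Polynomial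

lemma lastNode_nil {S : Type} (s : S) : lastNode s [] = s := rfl

lemma chain_nil {S : Type} (δ : S → S → Alg) (s : S) : chain δ s [] = [] := rfl

lemma main_eval (p : ℕ) (hp : 2 ≤ p) (g : Option (Fin (2 * p - 2))) (u : Fin 8) :
    boxAp p deltaB deltaC gMat () (g, u)
      = ∑ j ∈ Finset.range (p - 1),
          mcoefAp p (List.replicate j (bv 5) ++ [gMat () u]) g := by
  have hfun : boxAp p deltaB deltaC gMat () (g, u)
      = ∑ᶠ P : List Unit × List (Fin 8), ∑ t : Fin 8,
          if lastNode t P.2 = u then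
            mcoefAp p (chain deltaB () P.1 ++ gMat (lastNode () P.1) t :: chain deltaC t P.2) g
          else 0 := rfl
  rw [hfun]
  set S : Finset (List Unit × List (Fin 8)) :=
    (Finset.range (p - 1)).image (fun j => (List.replicate j (), ([] : List (Fin 8)))) with hS
  have hsupp : (Function.support fun P : List Unit × List (Fin 8) =>
      ∑ t : Fin 8, if lastNode t P.2 = u then
        mcoefAp p (chain deltaB () P.1 ++ gMat (lastNode () P.1) t :: chain deltaC t P.2) g
      else 0) ⊆ ↑S := by
    intro P hP
    by_contra hPS
    apply hP
    have hcase : P.2 ≠ [] ∨ p - 1 ≤ P.1.length := by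
      by_contra hc
      push_neg at hc
      apply hPS
      simp only [hS, Finset.coe_image, Set.mem_image, Finset.mem_coe, Finset.mem_range]
      refine ⟨P.1.length, by omega, ?_⟩
      have h1 : P.1 = List.replicate P.1.length () :=
        List.eq_replicate_length.2 fun b _ => rfl
      rw [← h1, ← hc.1]
    refine Finset.sum_eq_zero fun t _ => ?_
    rw [show gMat (lastNode () P.1) = gMat () from rfl, chainB,
      termZero p hp _ _ _ _ hcase]
    exact ite_self 0
  rw [finsum_eq_sum_of_support_subset _ hsupp]
  rw [hS, Finset.sum_image (fun x _ y _ hxy => by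
    simpa using congrArg (fun q : List Unit × List (Fin 8) => q.1.length) hxy)]
  refine Finset.sum_congr rfl fun j _ => ?_
  have hterm : ∀ t : Fin 8,
      (if lastNode t ([] : List (Fin 8)) = u then
        mcoefAp p (chain deltaB () (List.replicate j ()) ++
          gMat (lastNode () (List.replicate j ())) t :: chain deltaC t []) g
      else 0)
      = (if t = u then mcoefAp p (List.replicate j (bv 5) ++ [gMat () t]) g else 0) := by
    intro t
    rw [lastNode_nil, chainB, List.length_replicate, chain_nil,
      show gMat (lastNode () (List.replicate j ())) = gMat () from rfl]
  rw [Finset.sum_congr rfl fun t _ => hterm t,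
    Finset.sum_ite_eq' Finset.univ u
      (fun t => mcoefAp p (List.replicate j (bv 5) ++ [gMat () t]) g),
    if_pos (Finset.mem_univ u)]

end Main
/-- For `p ≥ 2`,
`(I_{A_p} ⊠ g)(α ⊗ x) = α ⊗ e + Σ_{i=0}^{p−2} β_{2p−i−2} ⊗ y³`
(recall `β_{2p−i−2}` is encoded as `some ⟨2p−i−3, _⟩` and `y³` as `6 : Fin 8`). -/
theorem statement9 (p : ℕ) (hp : 2 ≤ p) :
    boxAp p deltaB deltaC gMat () =
      Pi.single ((none : Option (Fin (2 * p - 2))), (3 : Fin 8)) 1 +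
      ∑ i ∈ Finset.range (p - 1),
        Pi.single ((some ⟨2 * p - i - 3, by omega⟩ : Option (Fin (2 * p - 2))),
          (6 : Fin 8)) 1 := by
  funext gu
  obtain ⟨g, u⟩ := gu
  rw [main_eval p hp g u, Pi.add_apply, Finset.sum_apply]
  fin_cases u
  -- u = 0
  · rw [show ((fun i : Fin 8 => i) ⟨0, by omega⟩ : Fin 8) = (0 : Fin 8) from rfl]
    rw [show gMat () 0 = 0 by decide,
      Finset.sum_eq_zero fun j _ => mcoefAp_zero p (by simp) g]
    simp [Pi.single_apply, Prod.ext_iff]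
  -- u = 1
  · rw [show ((fun i : Fin 8 => i) ⟨1, by omega⟩ : Fin 8) = (1 : Fin 8) from rfl]
    rw [show gMat () 1 = 0 by decide,
      Finset.sum_eq_zero fun j _ => mcoefAp_zero p (by simp) g]
    simp [Pi.single_apply, Prod.ext_iff]
  -- u = 2
  · rw [show ((fun i : Fin 8 => i) ⟨2, by omega⟩ : Fin 8) = (2 : Fin 8) from rfl]
    rw [show gMat () 2 = 0 by decide,
      Finset.sum_eq_zero fun j _ => mcoefAp_zero p (by simp) g]
    simp [Pi.single_apply, Prod.ext_iff]
  -- u = 3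
  · rw [show ((fun i : Fin 8 => i) ⟨3, by omega⟩ : Fin 8) = (3 : Fin 8) from rfl]
    rw [show gMat () 3 = bv 0 by decide]
    cases g with
    | none =>
      have hL : ∀ j ∈ Finset.range (p - 1),
          mcoefAp p (List.replicate j (bv 5) ++ [bv 0]) none
            = if j = 0 then 1 else 0 := by
        intro j _
        rw [mcoef_none p j (bv 0) [] (fun _ hh => absurd rfl hh)]
        simp [show (bv 0) 0 = 1 by decide]
      rw [Finset.sum_congr rfl hL,
        Finset.sum_ite_eq' (Finset.range (p - 1)) 0 (fun _ => 1),
        if_pos (Finset.mem_range.2 (by omega))]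
      simp [Pi.single_apply, Prod.ext_iff]
    | some i =>
      have hL : ∀ j ∈ Finset.range (p - 1),
          mcoefAp p (List.replicate j (bv 5) ++ [bv 0]) (some i) = 0 := by
        intro j _
        rw [mcoef_some p j (bv 0) [] i (fun _ hh => absurd rfl hh),
          show lastC 2 [bv 0] = 0 by decide]
        simp
      rw [Finset.sum_eq_zero hL]
      simp [Pi.single_apply, Prod.ext_iff]
  -- u = 4
  · rw [show ((fun i : Fin 8 => i) ⟨4, by omega⟩ : Fin 8) = (4 : Fin 8) from rfl]
    rw [show gMat () 4 = 0 by decide,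
      Finset.sum_eq_zero fun j _ => mcoefAp_zero p (by simp) g]
    simp [Pi.single_apply, Prod.ext_iff]
  -- u = 5
  · rw [show ((fun i : Fin 8 => i) ⟨5, by omega⟩ : Fin 8) = (5 : Fin 8) from rfl]
    rw [show gMat () 5 = bv 4 by decide]
    have hL : ∀ j ∈ Finset.range (p - 1),
        mcoefAp p (List.replicate j (bv 5) ++ [bv 4]) g = 0 := by
      intro j _
      cases g with
      | none =>
        rw [mcoef_none p j (bv 4) [] (fun _ hh => absurd rfl hh),
          show (bv 4) 0 = (0 : F2) by decide]
        simp
      | some i =>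
        rw [mcoef_some p j (bv 4) [] i (fun _ hh => absurd rfl hh),
          show lastC 2 [bv 4] = 0 by decide]
        simp
    rw [Finset.sum_eq_zero hL]
    simp [Pi.single_apply, Prod.ext_iff]
  -- u = 6
  · rw [show ((fun i : Fin 8 => i) ⟨6, by omega⟩ : Fin 8) = (6 : Fin 8) from rfl]
    rw [show gMat () 6 = bv 2 by decide]
    cases g with
    | none =>
      have hL : ∀ j ∈ Finset.range (p - 1),
          mcoefAp p (List.replicate j (bv 5) ++ [bv 2]) none = 0 := by
        intro j _
        rw [mcoef_none p j (bv 2) [] (fun _ hh => absurd rfl hh),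
          show (bv 2) 0 = (0 : F2) by decide]
        simp
      rw [Finset.sum_eq_zero hL]
      simp [Pi.single_apply, Prod.ext_iff]
    | some i =>
      have hL : ∀ j ∈ Finset.range (p - 1),
          mcoefAp p (List.replicate j (bv 5) ++ [bv 2]) (some i)
            = if (i : ℕ) = 2 * p - j - 3 then 1 else 0 := by
        intro j hj
        rw [mcoef_some p j (bv 2) [] i (fun _ hh => absurd rfl hh)]
        have hcond : (j + List.length ([] : List Alg) + 1 ≤ p - 1 ∧
            (i : ℕ) = 2 * p - (j + List.length ([] : List Alg) + 1) - 2)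
            ↔ ((i : ℕ) = 2 * p - j - 3) := by
          simp only [List.length_nil]
          constructor
          · rintro ⟨h1, h2⟩; omega
          · intro h1
            simp only [Finset.mem_range] at hj
            exact ⟨by omega, by omega⟩
        rw [if_congr hcond rfl rfl]
        simp [show lastC 2 [bv 2] = 1 by decide,
          show prodAt 5 (List.dropLast [bv 2]) = 1 by decide,
          show prodAt 5 ([] : List Alg) = 1 from rfl]
      rw [Finset.sum_congr rfl hL]
      simp only [Pi.single_apply]
      rw [if_neg (by simp), zero_add]
      refine Finset.sum_congr rfl fun j hj => ?_
      refine if_congr ?_ rfl rfl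
      simp [Prod.ext_iff, Fin.ext_iff]
  -- u = 7
  · rw [show ((fun i : Fin 8 => i) ⟨7, by omega⟩ : Fin 8) = (7 : Fin 8) from rfl]
    rw [show gMat () 7 = 0 by decide,
      Finset.sum_eq_zero fun j _ => mcoefAp_zero p (by simp) g]
    simp [Pi.single_apply, Prod.ext_iff]
end

section
/- For any ε₁, ε₂ ∈ {0, 1}, the morphism F = g₁ + g₂ + ε₁·ψ + ε₂·(h₁ + h₂ + h₃ + h₄) ∈ Mor(B, D) satisfies (I_A ⊠ F)(α ⊗ x) = α ⊗ (e₁ + e₂). (This shows that the candidate complement maps are all consistent with the computation F_C(v) + F_{C′}(v) = e₁ + e₂ for the exotic concordances C and C′.) -/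
/-- The basis of the type-D structure `D = B ⊕ C⁽¹⁾ ⊕ C⁽²⁾ ⊕ C⁽³⁾ ⊕ C⁽⁴⁾`:
`Sum.inl ()` is the generator `x` of `B`, and `Sum.inr (k, g)` is the generator
`g` of the `k`-th copy of `C`. -/
abbrev SD : Type := Unit ⊕ Fin 4 × Fin 8

/-- The differential of `D` (block diagonal). -/
def deltaD : SD → SD → Alg
  | Sum.inl _, Sum.inl _ => bv 5
  | Sum.inr (k, g), Sum.inr (k', g') => if k = k' then deltaC g g' else 0
  | _, _ => 0

/-- The idempotents of the generators of `D`. -/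
def idemD : SD → Fin 2
  | Sum.inl _ => 0
  | Sum.inr (_, g) => idemC g
open Polynomial in
/-- The `A∞`-operations of the module `A = CFA⁻(T_∞, λ)` (which has the single
generator `α`, with `α ⬝ ι₀ = α`), extended multilinearly: `mcoefA as` is the
coefficient of `α` in `m_{1 + as.length}(α, as)`, an element of `F₂[U]`
(`U = Polynomial.X`).  The only nonzero operations are strict unitality
`m₂(α, ι₀) = α` and `m_{3+j}(α, ρ₃, ρ₂₃, …, ρ₂₃, ρ₂) = U^{j+1} ⬝ α`. -/
noncomputable def mcoefA : List Alg → Polynomial F2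
  | [] => 0
  | [a] => C (a 0)
  | a :: as => C (a 4 * tail23 as) * X ^ as.length

/-- The box tensor product `(I_A ⊠ f)(α ⊗ n)` of the identity of the
`A∞`-module `A` with a morphism `f ∈ Mor(N, N′)` of type-D structures, as an
element of `A ⊗ N′` (a function assigning to each basis element `u` of `N′` the
`F₂[U]`-coefficient of `α ⊗ u`):
`(I_A ⊠ f)(α ⊗ n) = Σ_{j,l ≥ 0} m_{j+l+2}(α, a₁, …, a_j, b, c₁, …, c_l) ⊗ n″`,
summed over all terms `a₁ ⊗ ⋯ ⊗ a_j ⊗ n′` appearing in `δʲ(n)` (paths `P.1`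
in `N`), `b ⊗ m′` appearing in `f(n′)` (the intermediate basis element `t`),
and `c₁ ⊗ ⋯ ⊗ c_l ⊗ n″` appearing in `δˡ(m′)` (paths `P.2` in `N′`). -/
noncomputable def boxA {S T : Type} [Fintype T] [DecidableEq T]
    (δN : S → S → Alg) (δM : T → T → Alg) (f : S → T → Alg) (n : S) :
    T → Polynomial F2 :=
  fun u => ∑ᶠ P : List S × List T, ∑ t : T,
    if lastNode t P.2 = u then
      mcoefA (chain δN n P.1 ++ f (lastNode n P.1) t :: chain δM t P.2)
    else 0
/-- The morphism `ψ = (x ↦ ρ₁₂ ⊗ x) ∈ Mor(B, D)`. -/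
def psiD : Unit → SD → Alg := fun _ t => if t = Sum.inl () then bv 5 else 0

/-- The morphism `gₖ = (x ↦ ι₀ ⊗ eₖ + ρ₃ ⊗ y²ₖ + ρ₁ ⊗ y³ₖ) ∈ Mor(B, D)`. -/
def gDMat (k : Fin 4) : Unit → SD → Alg := fun _ t =>
  if t = Sum.inr (k, 3) then bv 0
  else if t = Sum.inr (k, 5) then bv 4
  else if t = Sum.inr (k, 6) then bv 2
  else 0

/-- The morphism `hₖ = (x ↦ ρ₁ ⊗ y⁴ₖ) ∈ Mor(B, D)`. -/
def hDMat (k : Fin 4) : Unit → SD → Alg := fun _ t =>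
  if t = Sum.inr (k, 7) then bv 2 else 0

section Aux
open Polynomial

lemma mcoefA_cons_cons (a b : Alg) (l : List Alg) :
    mcoefA (a :: b :: l) = C (a 4 * tail23 (b :: l)) * X ^ (b :: l).length := rfl

lemma mcoefA_bv5 (l1 l2 : List Alg) (a : Alg) :
    mcoefA (bv 5 :: (l1 ++ a :: l2)) = 0 := by
  have h5 : bv 5 4 = 0 := by decide
  cases l1 with
  | nil => simp [mcoefA_cons_cons, h5]
  | cons b l1' => simp [List.cons_append, mcoefA_cons_cons, h5]

lemma keyF (ε₁ ε₂ : F2) :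
    ∀ t t₁ : SD,
      ((gDMat 0 + gDMat 1 + ε₁ • psiD + ε₂ • (hDMat 0 + hDMat 1 + hDMat 2 + hDMat 3)) () t) 4
          * (deltaD t t₁) 3 = 0 ∧
      ((gDMat 0 + gDMat 1 + ε₁ • psiD + ε₂ • (hDMat 0 + hDMat 1 + hDMat 2 + hDMat 3)) () t) 4
          * (deltaD t t₁) 6 = 0 := by
  revert ε₁ ε₂; decide

lemma keyF0 (ε₁ ε₂ : F2) :
    ∀ u : SD,
      ((gDMat 0 + gDMat 1 + ε₁ • psiD + ε₂ • (hDMat 0 + hDMat 1 + hDMat 2 + hDMat 3)) () u) 0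
        = (if u = (Sum.inr (0, 3) : SD) then 1 else 0)
          + (if u = (Sum.inr (1, 3) : SD) then 1 else 0) := by
  revert ε₁ ε₂; decide

end Aux

/-- For any `ε₁, ε₂ ∈ F₂ = {0, 1}`, the morphism
`F = g₁ + g₂ + ε₁·ψ + ε₂·(h₁ + h₂ + h₃ + h₄) ∈ Mor(B, D)` satisfies
`(I_A ⊠ F)(α ⊗ x) = α ⊗ (e₁ + e₂)`
(recall `eₖ` is encoded as `Sum.inr (k-1, 3) : SD`). -/
theorem statement12 (ε₁ ε₂ : F2) :
    boxA deltaB deltaD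
      (gDMat 0 + gDMat 1 + ε₁ • psiD + ε₂ • (hDMat 0 + hDMat 1 + hDMat 2 + hDMat 3)) () =
      Pi.single (Sum.inr (0, 3) : SD) 1 + Pi.single (Sum.inr (1, 3) : SD) 1 :=  by
  classical
  set F : Unit → SD → Alg :=
    gDMat 0 + gDMat 1 + ε₁ • psiD + ε₂ • (hDMat 0 + hDMat 1 + hDMat 2 + hDMat 3) with hF
  funext u
  show (∑ᶠ P : List Unit × List SD, ∑ t : SD,
      if lastNode t P.2 = u then
        mcoefA (chain deltaB () P.1 ++ F (lastNode () P.1) t :: chain deltaD t P.2)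
      else 0) = _
  rw [finsum_eq_single _ (([], []) : List Unit × List SD)]
  · -- value at the empty paths
    have : ∀ t : SD, lastNode t ([] : List SD) = t := fun _ => rfl
    simp only [chain, lastNode, List.nil_append]
    refine (Finset.sum_ite_eq' Finset.univ u (fun t => mcoefA [F () t])).trans ?_
    simp only [Finset.mem_univ, if_true]
    have hm : mcoefA [F () u] = Polynomial.C (F () u 0) := rfl
    rw [hm, hF, keyF0 ε₁ ε₂ u]
    simp [Pi.single_apply, apply_ite Polynomial.C]
  · -- all other paths contribute zero
    rintro ⟨p1, p2⟩ hP
    apply Finset.sum_eq_zero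
    intro t _
    split
    · cases p1 with
      | cons s ss =>
          show mcoefA ((deltaB () s :: chain deltaB s ss) ++ _ :: _) = 0
          have : deltaB () s = bv 5 := rfl
          rw [List.cons_append, this, mcoefA_bv5]
      | nil =>
          cases p2 with
          | nil => exact absurd rfl hP
          | cons t₁ ts =>
              show mcoefA ([] ++ F () t :: deltaD t t₁ :: chain deltaD t₁ ts) = 0
              rw [List.nil_append, mcoefA_cons_cons]
              cases ts with
              | nil =>
                  show Polynomial.C (F () t 4 * (deltaD t t₁) 3) * _ = 0
                  rw [(keyF ε₁ ε₂ t t₁).1]; simp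
              | cons t₂ ts' =>
                  show Polynomial.C (F () t 4 *
                    ((deltaD t t₁) 6 * tail23 (deltaD t₁ t₂ :: chain deltaD t₂ ts'))) * _ = 0
                  rw [← mul_assoc, (keyF ε₁ ε₂ t t₁).2]; simp
    · rfl
end
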